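/- arXiv:2212.04880 — 2 statements merged into one kernel-verified Lean document; each statement's English description precedes it below -/
import Mathlib

section
/- Let G be a connected chordal graph, S the label of a minimum-weight edge of C(G), and u, v two vertices of G not in S. Then S is a u-v separator in G if and only if every maximal clique containing u and every maximal clique containing v lie in different connected components of C(G)⊖S. -/
/-!
If `K` and `K'` are adjacent in `C(G) ⊖ S`, their label `K ∩ K'` differs from `S` and, `S` being
of minimum weight, is not smaller than `S`; so it contains a vertex outside `S`. Chaining such
vertices along a path of `C(G) ⊖ S` from a clique of `u` to a clique of `v` gives a `u`-`v` path
of `G` avoiding `S`.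

Conversely, in a chordal graph any two maximal cliques containing a vertex `x` are joined by a
path of `C(G)` whose labels all contain `x`, so for `x ∉ S` none of them is `S`. This is proved
for every induced subgraph `G[W]`, by induction on `W`: remove a simplicial vertex `v ≠ x`, which
exists by Dirac's theorem (a chordal graph that is not complete has two non-adjacent simplicial
vertices, because its minimal separators are cliques), and lift the path found in `G[W - v]`.
Consecutive vertices of a `u`-`v` path avoiding `S` share a maximal clique, hence the cliques of
`u` and of `v` all lie in one component of `C(G) ⊖ S`.
-/

open SimpleGraph

attribute [local instance] Classical.propDecidable
set_option linter.unusedSectionVars false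

variable {V : Type*} [Fintype V] [DecidableEq V]

/-- A graph is chordal if it has no induced cycle of length at least 4. -/
def IsChordal (G : SimpleGraph V) : Prop :=
  ∀ n : ℕ, 4 ≤ n →
    ¬ ∃ f : Fin n ↪ V, ∀ i j, (cycleGraph n).Adj i j ↔ G.Adj (f i) (f j)

/-- `K` is a maximal clique of `G`. -/
def MaxClique (G : SimpleGraph V) (K : Finset V) : Prop :=
  G.IsClique (K : Set V) ∧ ∀ K' : Finset V, G.IsClique (K' : Set V) → K ⊆ K' → K = K'

/-- The type of maximal cliques of `G`. -/
abbrev CV (G : SimpleGraph V) := {K : Finset V // MaxClique G K}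

/-- `S` is a `u`-`v` separator of `G`: `u, v ∉ S` and every `u`-`v` walk meets `S`. -/
def Separates (G : SimpleGraph V) (S : Finset V) (u v : V) : Prop :=
  u ∉ S ∧ v ∉ S ∧ ∀ p : G.Walk u v, ∃ x ∈ p.support, x ∈ S

lemma Separates.symm' {G : SimpleGraph V} {S : Finset V} {u v : V}
    (h : Separates G S u v) : Separates G S v u := by
  obtain ⟨hu, hv, h⟩ := h
  refine ⟨hv, hu, fun p => ?_⟩
  obtain ⟨x, hx, hxS⟩ := h p.reverse
  refine ⟨x, ?_, hxS⟩
  simpa using hx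

/-- `S` is a minimal `u`-`v` separator of `G`. -/
def MinSeparates (G : SimpleGraph V) (S : Finset V) (u v : V) : Prop :=
  Separates G S u v ∧ ∀ S' : Finset V, S' ⊂ S → ¬ Separates G S' u v

lemma MinSeparates.symm' {G : SimpleGraph V} {S : Finset V} {u v : V}
    (h : MinSeparates G S u v) : MinSeparates G S v u :=
  ⟨h.1.symm', fun S' hS' hc => h.2 S' hS' hc.symm'⟩

/-- The clique graph `C(G)` of `G`: vertices are the maximal cliques; `K` and `K'` are
adjacent iff `K ∩ K'` is a minimal `u`-`v` separator for all `u ∈ K \ K'`, `v ∈ K' \ K`. -/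
def cliqueGraph (G : SimpleGraph V) : SimpleGraph (CV G) where
  Adj K K' := K ≠ K' ∧
    ∀ u ∈ K.1 \ K'.1, ∀ v ∈ K'.1 \ K.1, MinSeparates G (K.1 ∩ K'.1) u v
  symm := by
    constructor
    rintro K K' ⟨hne, h⟩
    refine ⟨hne.symm, fun u hu v hv => ?_⟩
    rw [Finset.inter_comm]
    exact (h v hv u hu).symm'
  loopless := by constructor; rintro K ⟨hne, -⟩; exact hne rfl

/-- A clique tree of `G`: a tree on the maximal cliques of `G` such that for every vertex
`v`, the maximal cliques containing `v` induce a connected subgraph (a subtree). -/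
def IsCliqueTree (G : SimpleGraph V) (T : SimpleGraph (CV G)) : Prop :=
  T.IsTree ∧ ∀ v : V, (T.induce {K : CV G | v ∈ K.1}).Connected

/-- `C(G) ⊖ S`: the clique graph with all edges labeled `S` deleted. -/
def deleteLabel (G : SimpleGraph V) (S : Finset V) : SimpleGraph (CV G) where
  Adj K K' := (cliqueGraph G).Adj K K' ∧ K.1 ∩ K'.1 ≠ S
  symm := by
    constructor
    rintro K K' ⟨h, hS⟩
    exact ⟨h.symm, by rwa [Finset.inter_comm]⟩
  loopless := by constructor; rintro K ⟨h, -⟩; exact (cliqueGraph G).loopless.irrefl K h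

/-- `w` is the minimum edge weight of `C(G)` (weights are `|K ∩ K'|`). -/
def IsMinEdgeWeight (G : SimpleGraph V) (w : ℕ) : Prop :=
  (∃ K K' : CV G, (cliqueGraph G).Adj K K' ∧ (K.1 ∩ K'.1).card = w) ∧
    ∀ K K' : CV G, (cliqueGraph G).Adj K K' → w ≤ (K.1 ∩ K'.1).card

/-- `C(G)` with all edges of (minimum) weight `w` deleted; its connected components are
the units. -/
def unitGraph (G : SimpleGraph V) (w : ℕ) : SimpleGraph (CV G) where
  Adj K K' := (cliqueGraph G).Adj K K' ∧ (K.1 ∩ K'.1).card ≠ w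
  symm := by
    constructor
    rintro K K' ⟨h, hw⟩
    exact ⟨h.symm, by rwa [Finset.inter_comm]⟩
  loopless := by constructor; rintro K ⟨h, -⟩; exact (cliqueGraph G).loopless.irrefl K h

/-- The type of units. -/
abbrev LUnit (G : SimpleGraph V) (w : ℕ) := (unitGraph G w).ConnectedComponent

/-- The unit containing a maximal clique `K`. -/
def umk (G : SimpleGraph V) (w : ℕ) (K : CV G) : LUnit G w :=
  (unitGraph G w).connectedComponentMk K

/-- The layer structure: units are its vertices; two units are adjacent iff some
edge of `C(G)` crosses them. -/
def layerGraph (G : SimpleGraph V) (w : ℕ) : SimpleGraph (LUnit G w) where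
  Adj U U' := U ≠ U' ∧ ∃ K K' : CV G,
    (cliqueGraph G).Adj K K' ∧ umk G w K = U ∧ umk G w K' = U'
  symm := by
    constructor
    rintro U U' ⟨hne, K, K', hadj, hK, hK'⟩
    exact ⟨hne.symm, K', K, hadj.symm, hK', hK⟩
  loopless := by constructor; rintro U ⟨hne, -⟩; exact hne rfl

/-- All edges of `C(G)` crossing `U` and `U'` have the label `S`. -/
def CrossLabel (G : SimpleGraph V) (w : ℕ) (U U' : LUnit G w) (S : Finset V) : Prop :=
  ∀ K K' : CV G, (cliqueGraph G).Adj K K' → umk G w K = U → umk G w K' = U' →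
    K.1 ∩ K'.1 = S

/-- `𝒱(U)`: the vertices of `G` contained in some maximal clique of the unit `U`. -/
def unitVerts (G : SimpleGraph V) (w : ℕ) (U : LUnit G w) : Set V :=
  {x | ∃ K : CV G, umk G w K = U ∧ x ∈ K.1}

/-- An MCS ordering of `G`: at each step, the visited vertex has the maximum number of
already visited neighbors among unvisited vertices. -/
def IsMCSOrdering (G : SimpleGraph V) (σ : Fin (Fintype.card V) ≃ V) : Prop :=
  ∀ i j : Fin (Fintype.card V), i ≤ j →
    (Finset.univ.filter fun l => l < i ∧ G.Adj (σ l) (σ j)).card ≤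
      (Finset.univ.filter fun l => l < i ∧ G.Adj (σ l) (σ i)).card

/-- A Prim ordering of `C(G)`: each vertex after the first is incident to an edge of
maximum weight among all edges between visited and unvisited vertices. -/
def IsPrimOrdering (G : SimpleGraph V) (π : Fin (Fintype.card (CV G)) ≃ CV G) : Prop :=
  ∀ i : Fin (Fintype.card (CV G)), 0 < (i : ℕ) →
    ∃ j, j < i ∧ (cliqueGraph G).Adj (π j) (π i) ∧
      ∀ j' k, j' < i → i ≤ k → (cliqueGraph G).Adj (π j') (π k) →
        ((π j').1 ∩ (π k).1).card ≤ ((π j).1 ∩ (π i).1).card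

/-- The position in `π` of the first maximal clique containing `x`. -/
noncomputable def firstIdx (G : SimpleGraph V)
    (π : Fin (Fintype.card (CV G)) ≃ CV G) (x : V) : ℕ :=
  sInf {j : ℕ | ∃ h : j < Fintype.card (CV G), x ∈ (π ⟨j, h⟩).1}

/-- `σ` is a generation of `π`. -/
def IsGeneration (G : SimpleGraph V) (π : Fin (Fintype.card (CV G)) ≃ CV G)
    (σ : Fin (Fintype.card V) ≃ V) : Prop :=
  ∀ x y : V, firstIdx G π x < firstIdx G π y → σ.symm x < σ.symm y

/-- `σ` is a linear extension of the relation `R`. -/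
def ExtendsR (R : V → V → Prop) (σ : Fin (Fintype.card V) ≃ V) : Prop :=
  ∀ x y : V, R x y → x ≠ y → σ.symm x < σ.symm y

/-- `π` respects `R`. -/
def RespectsR (G : SimpleGraph V) (R : V → V → Prop)
    (π : Fin (Fintype.card (CV G)) ≃ CV G) : Prop :=
  ∀ x y : V, R x y → x ≠ y → firstIdx G π x ≤ firstIdx G π y

/-- The set of vertices of `G` contained in one of the first `i` cliques of `π`. -/
def primPrefixVerts (G : SimpleGraph V) (π : Fin (Fintype.card (CV G)) ≃ CV G)
    (i : ℕ) : Set V :=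
  {x | ∃ j : Fin (Fintype.card (CV G)), (j : ℕ) < i ∧ x ∈ (π j).1}


namespace SimpleGraph

open Finset

section Restricted

variable {α : Type*} {G : SimpleGraph α}

variable (G) in
/-- `G[A]`, kept on the whole vertex type. -/
def inducedOn (A : Finset α) : SimpleGraph α where
  Adj a b := G.Adj a b ∧ a ∈ A ∧ b ∈ A
  symm := ⟨fun _ _ h => ⟨h.1.symm, h.2.2, h.2.1⟩⟩
  loopless := ⟨fun a h => G.loopless.irrefl a h.1⟩

@[simp]
lemma inducedOn_adj {A : Finset α} {a b : α} :
    (G.inducedOn A).Adj a b ↔ G.Adj a b ∧ a ∈ A ∧ b ∈ A :=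
  Iff.rfl

lemma inducedOn_le (A : Finset α) : G.inducedOn A ≤ G := fun _ _ h => h.1

lemma reachable_inducedOn_of_walk {H : SimpleGraph α} (hH : H ≤ G) {B : Finset α} {u w : α}
    (p : H.Walk u w) (hp : ∀ z ∈ p.support, z ∈ B) : (G.inducedOn B).Reachable u w :=
  ⟨p.transfer _ fun e he => by
    induction e using Sym2.ind with
    | _ a b =>
      exact ⟨hH (p.adj_of_mem_edges he), hp a (p.fst_mem_support_of_mem_edges he),
        hp b (p.snd_mem_support_of_mem_edges he)⟩⟩

lemma Walk.mem_of_mem_support_inducedOn {A : Finset α} {u w : α}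
    (p : (G.inducedOn A).Walk u w) (hu : u ∈ A) {z : α} (hz : z ∈ p.support) : z ∈ A := by
  induction p with
  | nil => simp_all
  | cons h p ih =>
    rw [SimpleGraph.Walk.support_cons, List.mem_cons] at hz
    rcases hz with rfl | hz
    exacts [hu, ih h.2.2 hz]

variable (G) in
noncomputable def reachSet (A : Finset α) (a : α) : Finset α :=
  A.filter fun z => (G.inducedOn A).Reachable a z

lemma mem_reachSet {A : Finset α} {a z : α} :
    z ∈ reachSet G A a ↔ z ∈ A ∧ (G.inducedOn A).Reachable a z :=
  mem_filter

lemma reachable_inducedOn_reachSet {A : Finset α} {a z z' : α} (hz : z ∈ reachSet G A a)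
    (hzz' : (G.inducedOn A).Reachable z z') : (G.inducedOn (reachSet G A a)).Reachable z z' := by
  obtain ⟨hzA, haz⟩ := mem_reachSet.1 hz
  obtain ⟨p⟩ := hzz'
  refine reachable_inducedOn_of_walk (inducedOn_le A) p fun y hy => mem_reachSet.2
    ⟨Walk.mem_of_mem_support_inducedOn p hzA hy, haz.trans ⟨p.takeUntil y hy⟩⟩

lemma ne_of_mem_reachSet {A : Finset α} {a b x y : α} (hab : ¬ (G.inducedOn A).Reachable a b)
    (hx : x ∈ G.reachSet A a) (hy : y ∈ G.reachSet A b) : x ≠ y := by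
  rintro rfl
  exact hab ((mem_reachSet.1 hx).2.trans (mem_reachSet.1 hy).2.symm)

lemma not_adj_of_mem_reachSet {A : Finset α} {a b x y : α}
    (hab : ¬ (G.inducedOn A).Reachable a b) (hx : x ∈ G.reachSet A a)
    (hy : y ∈ G.reachSet A b) : ¬ G.Adj x y := fun hxy =>
  hab ((mem_reachSet.1 hx).2.trans <|
    (inducedOn_adj.2 ⟨hxy, (mem_reachSet.1 hx).1, (mem_reachSet.1 hy).1⟩).reachable.trans
      (mem_reachSet.1 hy).2.symm)

variable (G) in
noncomputable def nbhdIn (W : Finset α) (v : α) : Finset α := W.filter (G.Adj v)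

lemma mem_nbhdIn {W : Finset α} {v z : α} : z ∈ G.nbhdIn W v ↔ z ∈ W ∧ G.Adj v z :=
  mem_filter

end Restricted

section MaxClique

variable {α : Type*} {G : SimpleGraph α}

variable (G) in
structure IsMaxCliqueIn (W K : Finset α) : Prop where
  subset : K ⊆ W
  isClique : G.IsClique (K : Set α)
  mem_of_forall_adj : ∀ y ∈ W, (∀ z ∈ K, z ≠ y → G.Adj y z) → y ∈ K

lemma exists_isMaxCliqueIn_superset [DecidableEq α] {W K : Finset α} (hKW : K ⊆ W)
    (hK : G.IsClique (K : Set α)) : ∃ M, IsMaxCliqueIn G W M ∧ K ⊆ M := by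
  obtain ⟨M, hKM, hM⟩ :=
    (W.powerset.filter fun M : Finset α => G.IsClique (M : Set α)).exists_le_maximal
      (mem_filter.2 ⟨mem_powerset.2 hKW, hK⟩)
  simp only [mem_filter, mem_powerset] at hM
  refine ⟨M, ⟨hM.1.1, hM.1.2, fun y hy hadj => ?_⟩, hKM⟩
  have hins : G.IsClique ((insert y M : Finset α) : Set α) := by
    rw [coe_insert]
    exact hM.1.2.insert fun z hz hyz => hadj z hz hyz.symm
  exact hM.2 ⟨insert_subset hy hM.1.1, hins⟩ (subset_insert y M) (mem_insert_self y M)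

lemma IsMaxCliqueIn.erase [DecidableEq α] {W K : Finset α} {v : α} (hK : IsMaxCliqueIn G W K)
    (hvK : v ∉ K) : IsMaxCliqueIn G (W.erase v) K :=
  ⟨fun _ hz => mem_erase.2 ⟨ne_of_mem_of_not_mem hz hvK, hK.subset hz⟩, hK.isClique,
    fun y hy => hK.mem_of_forall_adj y (mem_of_mem_erase hy)⟩

lemma IsMaxCliqueIn.eq_of_isClique {W K : Finset α} (hK : IsMaxCliqueIn G W K)
    (hW : G.IsClique (W : Set α)) : K = W :=
  subset_antisymm hK.subset fun y hy => hK.mem_of_forall_adj y hy fun _ hz hzy =>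
    hW hy (hK.subset hz) (Ne.symm hzy)

end MaxClique

section Simplicial

variable {α : Type*} {G : SimpleGraph α} {W : Finset α} {v : α}

variable (G) in
structure IsSimplicialIn (W : Finset α) (v : α) : Prop where
  mem : v ∈ W
  isClique_nbhdIn : G.IsClique (G.nbhdIn W v : Set α)

lemma IsSimplicialIn.of_isClique (hv : v ∈ W) (hW : G.IsClique (W : Set α)) :
    IsSimplicialIn G W v :=
  ⟨hv, hW.subset fun _ hz => (mem_nbhdIn.1 hz).1⟩

lemma IsMaxCliqueIn.not_subset_nbhdIn {K : Finset α} (hK : IsMaxCliqueIn G W K) (hvW : v ∈ W)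
    (hvK : v ∉ K) : ¬ K ⊆ G.nbhdIn W v := fun hsub =>
  hvK (hK.mem_of_forall_adj v hvW fun _ hz _ => (mem_nbhdIn.1 (hsub hz)).2)

variable [DecidableEq α]

lemma nbhdIn_subset_erase : G.nbhdIn W v ⊆ W.erase v := fun _ hz =>
  mem_erase.2 ⟨(mem_nbhdIn.1 hz).2.ne.symm, (mem_nbhdIn.1 hz).1⟩

lemma reachable_erase_of_isClique_nbhdIn {A : Finset α} (hv : G.IsClique (G.nbhdIn A v : Set α))
    {u w : α} (hu : u ≠ v) (hw : w ≠ v) (h : (G.inducedOn A).Reachable u w) :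
    (G.inducedOn (A.erase v)).Reachable u w := by
  -- A walk through `v` enters and leaves it at two neighbours of `v`, which are adjacent.
  suffices key : ∀ {u w : α} (p : (G.inducedOn A).Walk u w), w ≠ v →
      (u ≠ v → (G.inducedOn (A.erase v)).Reachable u w) ∧
        (u = v → ∀ y ∈ G.nbhdIn A v, (G.inducedOn (A.erase v)).Reachable y w) from
    let ⟨p⟩ := h; (key p hw).1 hu
  intro u w p hw
  induction p with
  | nil => exact ⟨fun _ => .rfl, fun huv => absurd huv hw⟩
  | @cons u z _ h p ih =>
    specialize ih hw
    refine ⟨fun hu => ?_, ?_⟩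
    · by_cases hz : z = v
      · subst hz
        exact ih.2 rfl u (mem_nbhdIn.2 ⟨h.2.1, h.1.symm⟩)
      · exact (inducedOn_adj.2 ⟨h.1, mem_erase.2 ⟨hu, h.2.1⟩,
          mem_erase.2 ⟨hz, h.2.2⟩⟩).reachable.trans (ih.1 hz)
    · rintro rfl y hy
      have hzu : z ≠ u := h.1.ne.symm
      by_cases hyz : y = z
      · exact hyz ▸ ih.1 hzu
      · obtain ⟨hyA, huy⟩ := mem_nbhdIn.1 hy
        exact (inducedOn_adj.2 ⟨hv hy (mem_nbhdIn.2 ⟨h.2.2, h.1⟩) hyz,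
          mem_erase.2 ⟨huy.ne.symm, hyA⟩, mem_erase.2 ⟨hzu, h.2.2⟩⟩).reachable.trans
            (ih.1 hzu)

lemma IsSimplicialIn.reachable_erase_sdiff (hv : IsSimplicialIn G W v) {L : Finset α} {u w : α}
    (hu : u ≠ v) (hw : w ≠ v) (h : (G.inducedOn (W \ L)).Reachable u w) :
    (G.inducedOn (W.erase v \ L)).Reachable u w := by
  rw [erase_sdiff_comm]
  refine reachable_erase_of_isClique_nbhdIn (hv.isClique_nbhdIn.subset fun z hz => ?_) hu hw h
  obtain ⟨hz, hvz⟩ := mem_nbhdIn.1 hz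
  exact mem_nbhdIn.2 ⟨(mem_sdiff.1 hz).1, hvz⟩

lemma IsSimplicialIn.isClique_insert (hv : IsSimplicialIn G W v) :
    G.IsClique ((insert v (G.nbhdIn W v) : Finset α) : Set α) := by
  rw [coe_insert]
  exact hv.isClique_nbhdIn.insert fun z hz _ => (mem_nbhdIn.1 hz).2

lemma IsSimplicialIn.isMaxCliqueIn_insert (hv : IsSimplicialIn G W v) :
    IsMaxCliqueIn G W (insert v (G.nbhdIn W v)) := by
  refine ⟨insert_subset hv.mem (filter_subset _ _), hv.isClique_insert, fun y hy hadj => ?_⟩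
  by_cases hyv : y = v
  · subst hyv
    exact mem_insert_self y _
  · exact mem_insert_of_mem
      (mem_nbhdIn.2 ⟨hy, (hadj v (mem_insert_self v _) (Ne.symm hyv)).symm⟩)

lemma IsSimplicialIn.eq_insert_of_mem (hv : IsSimplicialIn G W v) {K : Finset α}
    (hK : IsMaxCliqueIn G W K) (hvK : v ∈ K) : K = insert v (G.nbhdIn W v) := by
  have hsub : K ⊆ insert v (G.nbhdIn W v) := fun z hz => by
    by_cases hzv : z = v
    · subst hzv
      exact mem_insert_self z _
    · exact mem_insert_of_mem (mem_nbhdIn.2 ⟨hK.subset hz, hK.isClique hvK hz (Ne.symm hzv)⟩)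
  refine subset_antisymm hsub fun y hy => hK.mem_of_forall_adj y
    (hv.isMaxCliqueIn_insert.subset hy) fun z hz hzy => ?_
  exact hv.isClique_insert hy (hsub hz) (Ne.symm hzy)

lemma IsSimplicialIn.eq_nbhdIn_of_subset (hv : IsSimplicialIn G W v) {Q : Finset α}
    (hQ : IsMaxCliqueIn G (W.erase v) Q) (hsub : Q ⊆ G.nbhdIn W v) : Q = G.nbhdIn W v :=
  subset_antisymm hsub fun y hy => hQ.mem_of_forall_adj y (nbhdIn_subset_erase hy)
    fun _ hz hzy => hv.isClique_nbhdIn hy (hsub hz) (Ne.symm hzy)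

lemma IsMaxCliqueIn.of_erase {Q : Finset α} (hQ : IsMaxCliqueIn G (W.erase v) Q)
    (hQv : ¬ Q ⊆ G.nbhdIn W v) : IsMaxCliqueIn G W Q := by
  refine ⟨fun z hz => mem_of_mem_erase (hQ.subset hz), hQ.isClique, fun y hy hadj => ?_⟩
  obtain ⟨z, hzQ, hz⟩ := not_subset.1 hQv
  have hyv : y ≠ v := by
    rintro rfl
    have hzW := hQ.subset hzQ
    exact hz (mem_nbhdIn.2 ⟨mem_of_mem_erase hzW, hadj z hzQ (ne_of_mem_erase hzW)⟩)
  exact hQ.mem_of_forall_adj y (mem_erase.2 ⟨hyv, hy⟩) hadj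

end Simplicial

section WalkList

variable {α : Type*} {G : SimpleGraph α} {A : Finset α} {a b : α} {M : List α}

variable (G) in
/-- Walks are kept as vertex lists: `IsChordal` speaks of cycles indexed by `Fin n`, and
shortcutting a walk becomes index arithmetic. -/
structure IsWalkListIn (A : Finset α) (a b : α) (M : List α) : Prop where
  two_le_length : 2 ≤ M.length
  getElem_zero : M[0] = a
  getElem_last : M[M.length - 1] = b
  mem_of_pos_of_lt : ∀ i (hi : i < M.length), 0 < i → i < M.length - 1 → M[i] ∈ A
  adj : ∀ i (hi : i + 1 < M.length), G.Adj M[i] M[i + 1]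

lemma IsWalkListIn.pair (h : G.Adj a b) : IsWalkListIn G A a b [a, b] :=
  ⟨le_rfl, rfl, rfl, fun i _ hi hi' => by simp at hi'; omega, fun i hi => by
    obtain rfl : i = 0 := by simp at hi; omega
    exact h⟩

lemma IsWalkListIn.cons {c : α} (hM : IsWalkListIn G A c b M) (hac : G.Adj a c) (hc : c ∈ A) :
    IsWalkListIn G A a b (a :: M) := by
  have h2 := hM.two_le_length
  refine ⟨by simp; omega, rfl, ?_, fun i hi h0 hi' => ?_, fun i hi => ?_⟩
  · simpa [List.getElem_cons, show M.length ≠ 0 by omega] using hM.getElem_last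
  · simp only [List.length_cons] at hi hi'
    rw [List.getElem_cons, dif_neg h0.ne']
    rcases Nat.eq_zero_or_pos (i - 1) with h | h
    · simpa [h, hM.getElem_zero] using hc
    · exact hM.mem_of_pos_of_lt (i - 1) (by omega) h (by omega)
  · rcases i with _ | i
    · simpa [hM.getElem_zero] using hac
    · simpa using hM.adj i (by simp at hi; omega)

lemma exists_isWalkListIn {z z' : α} (hz : z ∈ A) (haz : G.Adj a z) (hz'b : G.Adj z' b)
    (h : (G.inducedOn A).Reachable z z') : ∃ M, IsWalkListIn G A a b M := by
  obtain ⟨p⟩ := h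
  induction p generalizing a with
  | nil => exact ⟨_, (IsWalkListIn.pair hz'b).cons haz hz⟩
  | cons h _ ih =>
    obtain ⟨M, hM⟩ := ih h.2.2 h.1 hz'b
    exact ⟨_, hM.cons haz hz⟩

lemma IsWalkListIn.cut (hM : IsWalkListIn G A a b M) {i j : ℕ} (hij : i < j)
    (hj : j < M.length) (hadj : G.Adj M[i] M[j]) :
    IsWalkListIn G A a b (M.take (i + 1) ++ M.drop j) := by
  have h2 := hM.two_le_length
  have hlen : (M.take (i + 1) ++ M.drop j).length = i + 1 + (M.length - j) := by simp; omega
  have left : ∀ t (ht : t < i + 1) (ht' : t < (M.take (i + 1) ++ M.drop j).length),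
      (M.take (i + 1) ++ M.drop j)[t] = M[t] := by
    intro t ht ht'
    rw [List.getElem_append_left (by simp; omega), List.getElem_take]
  have right : ∀ t (ht : i + 1 ≤ t) (ht' : t < (M.take (i + 1) ++ M.drop j).length),
      (M.take (i + 1) ++ M.drop j)[t] = M[j + (t - (i + 1))] := by
    intro t ht ht'
    rw [List.getElem_append_right (by simp; omega), List.getElem_drop]
    exact getElem_congr_idx (by simp; omega)
  refine ⟨by omega, by rw [left 0 (by omega), hM.getElem_zero], ?_, fun t ht h0 ht' => ?_,
    fun t ht => ?_⟩
  · rw [right _ (by omega), getElem_congr_idx (show _ = M.length - 1 by omega), hM.getElem_last]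
  · by_cases hti : t < i + 1
    · rw [left t hti]
      exact hM.mem_of_pos_of_lt t _ h0 (by omega)
    · rw [right t (by omega)]
      exact hM.mem_of_pos_of_lt _ _ (by omega) (by omega)
  · rcases lt_trichotomy (t + 1) (i + 1) with hti | hti | hti
    · rw [left t (by omega), left (t + 1) hti]
      exact hM.adj t (by omega)
    · obtain rfl : t = i := by omega
      rw [left t (by omega), right (t + 1) (by omega),
        getElem_congr_idx (show j + (t + 1 - (t + 1)) = j by omega)]
      exact hadj
    · rw [right t (by omega), right (t + 1) (by omega),
        getElem_congr_idx (show j + (t + 1 - (i + 1)) = j + (t - (i + 1)) + 1 by omega)]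
      exact hM.adj (j + (t - (i + 1))) (by omega)

lemma IsWalkListIn.mem_dropLast (hM : IsWalkListIn G A a b M) {x : α} (hx : x ∈ M.dropLast) :
    x = a ∨ x ∈ A := by
  obtain ⟨i, hi, rfl⟩ := List.mem_iff_getElem.1 hx
  simp only [List.length_dropLast] at hi
  rw [List.getElem_dropLast]
  rcases Nat.eq_zero_or_pos i with rfl | h0
  · exact Or.inl hM.getElem_zero
  · exact Or.inr (hM.mem_of_pos_of_lt i _ h0 hi)

variable (G) in
structure IsInducedPathListIn (A : Finset α) (a b : α) (M : List α) : Prop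
    extends IsWalkListIn G A a b M where
  adj_iff : ∀ i j (hi : i < M.length) (hj : j < M.length), i < j →
    (G.Adj M[i] M[j] ↔ j = i + 1)

lemma exists_isInducedPathListIn (h : ∃ M, IsWalkListIn G A a b M) :
    ∃ M, IsInducedPathListIn G A a b M := by
  obtain ⟨M, hM, hmin⟩ := WellFounded.has_min (measure List.length).wf
    {M | IsWalkListIn G A a b M} h
  refine ⟨M, hM, fun i j hi hj hij => ⟨fun hadj => ?_, ?_⟩⟩
  · by_contra hne
    refine hmin _ (hM.cut hij hj hadj) (show _ < M.length from ?_)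
    simp only [List.length_append, List.length_take, List.length_drop]
    omega
  · rintro rfl
    exact hM.adj i hj

lemma IsInducedPathListIn.three_le_length (hM : IsInducedPathListIn G A a b M)
    (hab : ¬ G.Adj a b) : 3 ≤ M.length := by
  by_contra h
  have h2 := hM.two_le_length
  have := hM.adj 0 (by omega)
  rw [hM.getElem_zero, getElem_congr_idx (show 0 + 1 = M.length - 1 by omega),
    hM.getElem_last] at this
  exact hab this

lemma IsInducedPathListIn.nodup (hM : IsInducedPathListIn G A a b M) (hab : a ≠ b) : M.Nodup := by
  have h2 := hM.two_le_length
  refine List.nodup_iff_injective_get.2 fun ⟨i, hi⟩ ⟨j, hj⟩ he => ?_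
  simp only [List.get_eq_getElem] at he
  suffices ∀ i j (hi : i < M.length) (hj : j < M.length), i < j → M[i] ≠ M[j] by
    rcases lt_trichotomy i j with h | rfl | h
    exacts [(this i j hi hj h he).elim, rfl, (this j i hj hi h he.symm).elim]
  intro i j hi hj hij he
  by_cases hjl : j + 1 < M.length
  · have := (hM.adj_iff i (j + 1) hi hjl (by omega)).1 (he ▸ hM.adj j hjl)
    omega
  by_cases hi0 : i = 0
  · subst hi0
    rw [hM.getElem_zero, getElem_congr_idx (show j = M.length - 1 by omega),
      hM.getElem_last] at he
    exact hab he
  · have hadj := hM.adj (i - 1) (by omega)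
    rw [getElem_congr_idx (show i - 1 + 1 = i by omega), he] at hadj
    have := (hM.adj_iff (i - 1) j (by omega) hj (by omega)).1 hadj
    omega

end WalkList

section InducedCycle

variable {α : Type*} {G : SimpleGraph α}

lemma cycleGraph_adj_iff_of_lt {n : ℕ} {i j : Fin n} (hij : (i : ℕ) < j) :
    (cycleGraph n).Adj i j ↔ (j : ℕ) = i + 1 ∨ ((i : ℕ) = 0 ∧ (j : ℕ) = n - 1) := by
  have hj := j.isLt
  rw [cycleGraph_adj', Fin.sub_def, Fin.sub_def]
  simp only
  rw [Nat.mod_eq_of_lt (by omega : n - j + i < n),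
    show n - i + j = (j - i) + n by omega, Nat.add_mod_right, Nat.mod_eq_of_lt (by omega)]
  omega

variable (G) in
structure IsInducedCycleList (l : List α) : Prop where
  four_le_length : 4 ≤ l.length
  nodup : l.Nodup
  adj_iff : ∀ i j (hi : i < l.length) (hj : j < l.length), i < j →
    (G.Adj l[i] l[j] ↔ j = i + 1 ∨ (i = 0 ∧ j = l.length - 1))

lemma IsChordal.not_isInducedCycleList (hG : IsChordal G) {l : List α} :
    ¬ IsInducedCycleList G l := by
  intro hc
  refine hG l.length hc.four_le_length
    ⟨⟨l.get, List.nodup_iff_injective_get.1 hc.nodup⟩, ?_⟩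
  have key : ∀ i j : Fin l.length, (i : ℕ) < j →
      ((cycleGraph l.length).Adj i j ↔ G.Adj l[i] l[j]) :=
    fun i j hij => (cycleGraph_adj_iff_of_lt hij).trans (hc.adj_iff i j i.isLt j.isLt hij).symm
  intro i j
  simp only [Function.Embedding.coeFn_mk, List.get_eq_getElem]
  rcases lt_trichotomy (i : ℕ) j with h | h | h
  · exact key i j h
  · obtain rfl := Fin.ext h
    simp
  · rw [adj_comm, G.adj_comm]
    exact key j i h

lemma isInducedCycleList_dropLast_append {a b : α} {A B : Finset α} {M N : List α}
    (hM : IsInducedPathListIn G A a b M) (hN : IsInducedPathListIn G B b a N)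
    (hne : a ≠ b) (hab : ¬ G.Adj a b) (haB : a ∉ B) (hbA : b ∉ A) (hAB : Disjoint A B)
    (hcross : ∀ x ∈ A, ∀ y ∈ B, ¬ G.Adj x y) :
    IsInducedCycleList G (M.dropLast ++ N.dropLast) := by
  have hm := hM.three_le_length hab
  have hn := hN.three_le_length fun h => hab h.symm
  set l := M.dropLast ++ N.dropLast
  have hc : l.length = (M.length - 1) + (N.length - 1) := by simp [l]
  have first : ∀ k (hk : k < M.length - 1) (h : k < l.length), l[k] = M[k] := by
    intro k hk h
    rw [List.getElem_append_left (by simpa using hk), List.getElem_dropLast]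
  have second : ∀ k (hk : M.length - 1 ≤ k) (h : k < l.length),
      l[k] = N[k - (M.length - 1)] := by
    intro k hk h
    rw [List.getElem_append_right (by simpa using hk), List.getElem_dropLast]
    exact getElem_congr_idx (by simp)
  refine ⟨by omega, ?_, fun i j hi hj hij => ?_⟩
  · refine List.nodup_append.2 ⟨(hM.nodup hne).sublist (List.dropLast_sublist _),
      (hN.nodup hne.symm).sublist (List.dropLast_sublist _), fun x hx y hy hxy => ?_⟩
    subst hxy
    rcases hM.mem_dropLast hx, hN.mem_dropLast hy with ⟨rfl | hxA, rfl | hxB⟩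
    · exact hne rfl
    · exact haB hxB
    · exact hbA hxA
    · exact Finset.disjoint_left.1 hAB hxA hxB
  by_cases hjM : j < M.length - 1
  · rw [first i (by omega), first j hjM, hM.adj_iff i j _ _ hij]
    omega
  by_cases hiM : M.length - 1 ≤ i
  · rw [second i hiM, second j (by omega), hN.adj_iff _ _ _ _ (by omega)]
    omega
  rw [first i (by omega), second j (by omega)]
  by_cases hj0 : j - (M.length - 1) = 0
  · rw [getElem_congr_idx hj0, hN.getElem_zero, ← hM.getElem_last,
      hM.adj_iff i _ _ _ (by omega)]
    omega
  by_cases hi0 : i = 0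
  · subst hi0
    rw [hM.getElem_zero, ← hN.getElem_last, G.adj_comm, hN.adj_iff _ _ _ _ (by omega)]
    omega
  refine iff_of_false (hcross _ (hM.mem_of_pos_of_lt i _ (by omega) (by omega)) _
    (hN.mem_of_pos_of_lt _ _ (by omega) (by omega))) (by omega)

end InducedCycle

section MinimalSeparator

variable {α : Type*} [DecidableEq α] {G : SimpleGraph α} {W T : Finset α} {a b : α}

variable (G) in
structure IsMinimalSeparatorIn (W T : Finset α) (a b : α) : Prop where
  left_mem : a ∈ W \ T
  right_mem : b ∈ W \ T
  not_reachable : ¬ (G.inducedOn (W \ T)).Reachable a b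
  reachable_erase : ∀ t ∈ T, (G.inducedOn (W \ T.erase t)).Reachable a b

lemma IsMinimalSeparatorIn.symm (h : IsMinimalSeparatorIn G W T a b) :
    IsMinimalSeparatorIn G W T b a :=
  ⟨h.right_mem, h.left_mem, fun hr => h.not_reachable hr.symm,
    fun t ht => (h.reachable_erase t ht).symm⟩

lemma IsMinimalSeparatorIn.exists_adj_mem_reachSet (h : IsMinimalSeparatorIn G W T a b) {t : α}
    (ht : t ∈ T) : ∃ z ∈ G.reachSet (W \ T) a, G.Adj t z := by
  by_contra! hno
  obtain ⟨p⟩ := h.reachable_erase t ht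
  suffices key : ∀ {u w : α} (p : (G.inducedOn (W \ T.erase t)).Walk u w),
      u ∈ G.reachSet (W \ T) a → w ∈ G.reachSet (W \ T) a from
    h.not_reachable (mem_reachSet.1 (key p (mem_reachSet.2 ⟨h.left_mem, .rfl⟩))).2
  intro u w p hu
  induction p with
  | nil => exact hu
  | @cons u y _ huy _ ih =>
    have hyt : y ≠ t := by
      rintro rfl
      exact hno u hu huy.1.symm
    have hy : y ∈ W \ T := by
      obtain ⟨hyW, hyT⟩ := mem_sdiff.1 huy.2.2
      exact mem_sdiff.2 ⟨hyW, fun hyT' => hyT (mem_erase.2 ⟨hyt, hyT'⟩)⟩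
    obtain ⟨huA, hau⟩ := mem_reachSet.1 hu
    exact ih (mem_reachSet.2 ⟨hy, hau.trans (inducedOn_adj.2 ⟨huy.1, huA, hy⟩).reachable⟩)

lemma IsMinimalSeparatorIn.exists_isInducedPathListIn (h : IsMinimalSeparatorIn G W T a b)
    {s t : α} (hs : s ∈ T) (ht : t ∈ T) :
    ∃ M, IsInducedPathListIn G (G.reachSet (W \ T) a) s t M := by
  obtain ⟨zs, hzs, hszs⟩ := h.exists_adj_mem_reachSet hs
  obtain ⟨zt, hzt, htzt⟩ := h.exists_adj_mem_reachSet ht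
  refine SimpleGraph.exists_isInducedPathListIn (exists_isWalkListIn hzs hszs htzt.symm ?_)
  exact reachable_inducedOn_reachSet hzs ((mem_reachSet.1 hzs).2.symm.trans (mem_reachSet.1 hzt).2)

/-- Dirac's lemma. -/
lemma IsChordal.isClique_of_isMinimalSeparatorIn (hG : IsChordal G)
    (h : IsMinimalSeparatorIn G W T a b) : G.IsClique (T : Set α) := by
  intro s hs t ht hst
  by_contra hnadj
  obtain ⟨M, hM⟩ := h.exists_isInducedPathListIn hs ht
  obtain ⟨N, hN⟩ := h.symm.exists_isInducedPathListIn ht hs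
  have not_mem : ∀ {x c : α}, x ∈ T → x ∉ G.reachSet (W \ T) c := fun hx hx' =>
    (mem_sdiff.1 (mem_reachSet.1 hx').1).2 hx
  refine hG.not_isInducedCycleList (isInducedCycleList_dropLast_append hM hN hst hnadj
    (not_mem hs) (not_mem ht) ?_ fun x hx y hy => not_adj_of_mem_reachSet h.not_reachable hx hy)
  exact Finset.disjoint_left.2 fun x hx hx' => ne_of_mem_reachSet h.not_reachable hx hx' rfl

lemma exists_isMinimalSeparatorIn (ha : a ∈ W) (hb : b ∈ W) (hab : a ≠ b)
    (hnadj : ¬ G.Adj a b) : ∃ T ⊆ W, IsMinimalSeparatorIn G W T a b := by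
  set T₀ := (W.erase a).erase b
  have hT₀W : T₀ ⊆ W := (erase_subset _ _).trans (erase_subset _ _)
  have hT₀ : ¬ (G.inducedOn (W \ T₀)).Reachable a b := by
    have hsub : ∀ z ∈ W \ T₀, z = a ∨ z = b := fun z hz => by
      simp only [T₀, mem_sdiff, mem_erase] at hz
      tauto
    rintro ⟨_ | ⟨h, _⟩⟩
    · exact hab rfl
    · rcases hsub _ h.2.2 with rfl | rfl
      exacts [h.1.ne rfl, hnadj h.1]
  obtain ⟨T, hT, hmin⟩ := exists_min_image
    (T₀.powerset.filter fun T => ¬ (G.inducedOn (W \ T)).Reachable a b) card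
    ⟨T₀, mem_filter.2 ⟨mem_powerset_self T₀, hT₀⟩⟩
  obtain ⟨hTT₀, hsep⟩ := mem_filter.1 hT
  rw [mem_powerset] at hTT₀
  have hnot : ∀ {x}, x = a ∨ x = b → x ∉ T := fun hx hxT => by
    have := hTT₀ hxT
    simp only [T₀, mem_erase] at this
    tauto
  refine ⟨T, hTT₀.trans hT₀W, mem_sdiff.2 ⟨ha, hnot (.inl rfl)⟩,
    mem_sdiff.2 ⟨hb, hnot (.inr rfl)⟩, hsep, fun t ht => ?_⟩
  by_contra hsep'
  have := hmin (T.erase t)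
    (mem_filter.2 ⟨mem_powerset.2 ((erase_subset t T).trans hTT₀), hsep'⟩)
  rw [card_erase_of_mem ht] at this
  have := card_pos.2 ⟨t, ht⟩
  omega

end MinimalSeparator

section Dirac

variable {α : Type*} [DecidableEq α] {G : SimpleGraph α} {W : Finset α}

variable (G) in
def HasNonadjSimplicialPair (W : Finset α) : Prop :=
  ∃ s₁ s₂, s₁ ≠ s₂ ∧ ¬ G.Adj s₁ s₂ ∧
    IsSimplicialIn G W s₁ ∧ IsSimplicialIn G W s₂

/-- The inductive step of Dirac's theorem `IsChordal.exists_isSimplicialIn_pair`. -/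
lemma IsChordal.exists_isSimplicialIn_mem_reachSet (hG : IsChordal G) {T : Finset α} {a b : α}
    (hTW : T ⊆ W) (hT : IsMinimalSeparatorIn G W T a b)
    (ih : ∀ W' ⊂ W, ¬ G.IsClique (W' : Set α) → G.HasNonadjSimplicialPair W') :
    ∃ z ∈ G.reachSet (W \ T) a, IsSimplicialIn G W z := by
  set C := G.reachSet (W \ T) a
  have hCW : C ⊆ W := fun z hz => (mem_sdiff.1 (mem_reachSet.1 hz).1).1
  have hbC : b ∉ C := fun hb => hT.not_reachable (mem_reachSet.1 hb).2
  have hW₁ : C ∪ T ⊂ W := by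
    refine ssubset_of_subset_of_ne (union_subset hCW hTW) fun he => ?_
    obtain ⟨hbW, hbT⟩ := mem_sdiff.1 hT.right_mem
    rcases mem_union.1 (he ▸ hbW) with hb | hb
    exacts [hbC hb, hbT hb]
  have lift : ∀ z ∈ C, IsSimplicialIn G (C ∪ T) z → IsSimplicialIn G W z := by
    refine fun z hz hs => ⟨hW₁.subset hs.mem, hs.isClique_nbhdIn.subset fun y hy => ?_⟩
    obtain ⟨hyW, hzy⟩ := mem_nbhdIn.1 hy
    refine mem_nbhdIn.2 ⟨?_, hzy⟩
    by_cases hyT : y ∈ T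
    · exact mem_union_right _ hyT
    · obtain ⟨hzWT, haz⟩ := mem_reachSet.1 hz
      have hy' : y ∈ W \ T := mem_sdiff.2 ⟨hyW, hyT⟩
      exact mem_union_left _ (mem_reachSet.2
        ⟨hy', haz.trans (inducedOn_adj.2 ⟨hzy, hzWT, hy'⟩).reachable⟩)
  have haC : a ∈ C := mem_reachSet.2 ⟨hT.left_mem, .rfl⟩
  by_cases hcl : G.IsClique ((C ∪ T : Finset α) : Set α)
  · exact ⟨a, haC, lift a haC (.of_isClique (mem_union_left _ haC) hcl)⟩
  obtain ⟨s₁, s₂, hne, hnadj, hs₁, hs₂⟩ := ih _ hW₁ hcl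
  have hTcl := hG.isClique_of_isMinimalSeparatorIn hT
  rcases mem_union.1 hs₁.mem with h₁ | h₁
  · exact ⟨s₁, h₁, lift s₁ h₁ hs₁⟩
  rcases mem_union.1 hs₂.mem with h₂ | h₂
  · exact ⟨s₂, h₂, lift s₂ h₂ hs₂⟩
  exact (hnadj (hTcl h₁ h₂ hne)).elim

/-- Dirac's theorem. -/
theorem IsChordal.exists_isSimplicialIn_pair (hG : IsChordal G) (W : Finset α)
    (hW : ¬ G.IsClique (W : Set α)) : G.HasNonadjSimplicialPair W := by
  induction W using Finset.strongInduction with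
  | H W ih =>
  obtain ⟨a, ha, b, hb, hab, hnadj⟩ : ∃ a ∈ W, ∃ b ∈ W, a ≠ b ∧ ¬ G.Adj a b := by
    simpa [IsClique, Set.Pairwise] using hW
  obtain ⟨T, hTW, hT⟩ := exists_isMinimalSeparatorIn ha hb hab hnadj
  obtain ⟨z₁, hz₁, hs₁⟩ := hG.exists_isSimplicialIn_mem_reachSet hTW hT ih
  obtain ⟨z₂, hz₂, hs₂⟩ := hG.exists_isSimplicialIn_mem_reachSet hTW hT.symm ih
  exact ⟨z₁, z₂, ne_of_mem_reachSet hT.not_reachable hz₁ hz₂,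
    not_adj_of_mem_reachSet hT.not_reachable hz₁ hz₂, hs₁, hs₂⟩

end Dirac

section CliqueEdge

variable {α : Type*} [DecidableEq α] {G : SimpleGraph α} {W : Finset α} {v x : α}

variable (G) in
/-- An edge of the clique graph of `G[W]` whose label `K ∩ K'` contains `x`. -/
structure IsCliqueEdgeIn (W : Finset α) (x : α) (K K' : Finset α) : Prop where
  left : IsMaxCliqueIn G W K
  right : IsMaxCliqueIn G W K'
  ne : K ≠ K'
  mem_label : x ∈ K ∩ K'
  separates : ∀ u ∈ K \ K', ∀ w ∈ K' \ K, ¬ (G.inducedOn (W \ (K ∩ K'))).Reachable u w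

lemma IsCliqueEdgeIn.symm {K K' : Finset α} (h : G.IsCliqueEdgeIn W x K K') :
    G.IsCliqueEdgeIn W x K' K := by
  refine ⟨h.right, h.left, h.ne.symm, inter_comm K K' ▸ h.mem_label, fun u hu w hw hr => ?_⟩
  rw [inter_comm] at hr
  exact h.separates w hw u hu hr.symm

instance : Std.Symm (G.IsCliqueEdgeIn W x) := ⟨fun _ _ h => h.symm⟩

section Lift

variable (hv : IsSimplicialIn G W v)
include hv

lemma IsCliqueEdgeIn.of_erase {Q Q' : Finset α} (he : G.IsCliqueEdgeIn (W.erase v) x Q Q')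
    (hQ : ¬ Q ⊆ G.nbhdIn W v) (hQ' : ¬ Q' ⊆ G.nbhdIn W v) : G.IsCliqueEdgeIn W x Q Q' := by
  refine ⟨he.left.of_erase hQ, he.right.of_erase hQ', he.ne, he.mem_label,
    fun u hu w hw hr => he.separates u hu w hw ?_⟩
  exact hv.reachable_erase_sdiff (ne_of_mem_erase (he.left.subset (mem_sdiff.1 hu).1))
    (ne_of_mem_erase (he.right.subset (mem_sdiff.1 hw).1)) hr

lemma IsCliqueEdgeIn.insert_of_erase {Q : Finset α}
    (he : G.IsCliqueEdgeIn (W.erase v) x (G.nbhdIn W v) Q) :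
    G.IsCliqueEdgeIn W x (insert v (G.nbhdIn W v)) Q := by
  have hvQ : v ∉ Q := fun h => (mem_erase.1 (he.right.subset h)).1 rfl
  have hQ : ¬ Q ⊆ G.nbhdIn W v := fun h => he.ne (hv.eq_nbhdIn_of_subset he.right h).symm
  have hlabel : insert v (G.nbhdIn W v) ∩ Q = G.nbhdIn W v ∩ Q := insert_inter_of_notMem hvQ
  refine ⟨hv.isMaxCliqueIn_insert, he.right.of_erase hQ, fun h => hvQ (h ▸ mem_insert_self v _),
    by rw [hlabel]; exact he.mem_label, fun u hu w hw hr => ?_⟩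
  rw [hlabel] at hr
  obtain ⟨hwQ, hwN⟩ := mem_sdiff.1 hw
  have hwv : w ≠ v := fun h => hvQ (h ▸ hwQ)
  have hw' : w ∈ Q \ G.nbhdIn W v := mem_sdiff.2 ⟨hwQ, fun h => hwN (mem_insert_of_mem h)⟩
  rw [mem_sdiff, mem_insert] at hu
  rcases hu with ⟨rfl | huN, huQ⟩
  · obtain ⟨_ | @⟨_, s, _, hus, p⟩⟩ := hr
    · exact hwv rfl
    · have hsN : s ∈ G.nbhdIn W u := mem_nbhdIn.2 ⟨(mem_sdiff.1 hus.2.2).1, hus.1⟩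
      have hsQ : s ∉ Q := fun h => (mem_sdiff.1 hus.2.2).2 (mem_inter.2 ⟨hsN, h⟩)
      exact he.separates s (mem_sdiff.2 ⟨hsN, hsQ⟩) w hw'
        (hv.reachable_erase_sdiff hus.1.ne.symm hwv ⟨p⟩)
  · exact he.separates u (mem_sdiff.2 ⟨huN, huQ⟩) w hw'
      (hv.reachable_erase_sdiff (mem_nbhdIn.1 huN).2.ne.symm hwv hr)

lemma IsCliqueEdgeIn.insert_of_ssuperset {L : Finset α} (hL : IsMaxCliqueIn G (W.erase v) L)
    (hsub : G.nbhdIn W v ⊆ L) (hne : L ≠ G.nbhdIn W v) (hx : x ∈ G.nbhdIn W v) :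
    G.IsCliqueEdgeIn W x (insert v (G.nbhdIn W v)) L := by
  have hvL : v ∉ L := fun h => (mem_erase.1 (hL.subset h)).1 rfl
  have hlabel : insert v (G.nbhdIn W v) ∩ L = G.nbhdIn W v := by
    rw [insert_inter_of_notMem hvL, inter_eq_left.2 hsub]
  refine ⟨hv.isMaxCliqueIn_insert, hL.of_erase fun h => hne (subset_antisymm h hsub),
    fun h => hvL (h ▸ mem_insert_self v _), by rw [hlabel]; exact hx, fun u hu w hw hr => ?_⟩
  rw [hlabel] at hr
  obtain rfl : u = v := by
    rw [mem_sdiff, mem_insert] at hu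
    exact hu.1.resolve_right fun h => hu.2 (hsub h)
  obtain ⟨_ | ⟨hus, _⟩⟩ := hr
  · exact hvL (mem_sdiff.1 hw).1
  · exact (mem_sdiff.1 hus.2.2).2 (mem_nbhdIn.2 ⟨(mem_sdiff.1 hus.2.2).1, hus.1⟩)

variable (G W v) in
/-- Maximal cliques of `G[W - v]` become maximal cliques of `G[W]`, except for the
neighbourhood of `v`, which grows into `v + N(v)`. -/
noncomputable def liftClique (Q : Finset α) : Finset α :=
  if Q ⊆ G.nbhdIn W v then insert v (G.nbhdIn W v) else Q

omit hv in
lemma liftClique_of_not_subset {Q : Finset α} (hQ : ¬ Q ⊆ G.nbhdIn W v) :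
    liftClique G W v Q = Q :=
  if_neg hQ

omit hv in
lemma liftClique_of_subset {Q : Finset α} (hQ : Q ⊆ G.nbhdIn W v) :
    liftClique G W v Q = insert v (G.nbhdIn W v) :=
  if_pos hQ

lemma IsCliqueEdgeIn.liftClique {Q Q' : Finset α} (he : G.IsCliqueEdgeIn (W.erase v) x Q Q') :
    G.IsCliqueEdgeIn W x (liftClique G W v Q) (liftClique G W v Q') := by
  by_cases hQ : Q ⊆ G.nbhdIn W v
  · obtain rfl := hv.eq_nbhdIn_of_subset he.left hQ
    have hQ' : ¬ Q' ⊆ G.nbhdIn W v := fun h => he.ne (hv.eq_nbhdIn_of_subset he.right h).symm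
    rw [liftClique_of_subset hQ, liftClique_of_not_subset hQ']
    exact IsCliqueEdgeIn.insert_of_erase hv he
  by_cases hQ' : Q' ⊆ G.nbhdIn W v
  · obtain rfl := hv.eq_nbhdIn_of_subset he.right hQ'
    rw [liftClique_of_subset hQ', liftClique_of_not_subset hQ]
    exact (IsCliqueEdgeIn.insert_of_erase hv he.symm).symm
  rw [liftClique_of_not_subset hQ, liftClique_of_not_subset hQ']
  exact IsCliqueEdgeIn.of_erase hv he hQ hQ'

lemma reflTransGen_liftClique {Q Q' : Finset α}
    (h : Relation.ReflTransGen (G.IsCliqueEdgeIn (W.erase v) x) Q Q') :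
    Relation.ReflTransGen (G.IsCliqueEdgeIn W x) (liftClique G W v Q) (liftClique G W v Q') :=
  Relation.ReflTransGen.lift _ (fun _ _ he => he.liftClique hv) _ _ h

/-- The inductive step of `IsChordal.reflTransGen_isCliqueEdgeIn`. -/
lemma IsSimplicialIn.reflTransGen_of_erase (hvx : v ≠ x)
    (ih : ∀ Q Q', IsMaxCliqueIn G (W.erase v) Q → IsMaxCliqueIn G (W.erase v) Q' → x ∈ Q →
      x ∈ Q' → Relation.ReflTransGen (G.IsCliqueEdgeIn (W.erase v) x) Q Q')
    {K K' : Finset α} (hK : IsMaxCliqueIn G W K) (hK' : IsMaxCliqueIn G W K') (hxK : x ∈ K)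
    (hxK' : x ∈ K') : Relation.ReflTransGen (G.IsCliqueEdgeIn W x) K K' := by
  have lift_of_not_mem : ∀ {B}, IsMaxCliqueIn G W B → v ∉ B → liftClique G W v B = B :=
    fun hB hvB => liftClique_of_not_subset (hB.not_subset_nbhdIn hv.mem hvB)
  have of_mem_of_not_mem : ∀ {A B}, IsMaxCliqueIn G W A → IsMaxCliqueIn G W B → x ∈ A →
      x ∈ B → v ∈ A → v ∉ B → Relation.ReflTransGen (G.IsCliqueEdgeIn W x) A B := by
    intro A B hA hB hxA hxB hvA hvB
    obtain rfl := hv.eq_insert_of_mem hA hvA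
    have hxN : x ∈ G.nbhdIn W v := (mem_insert.1 hxA).resolve_left hvx.symm
    obtain ⟨L, hL, hNL⟩ := exists_isMaxCliqueIn_superset nbhdIn_subset_erase hv.isClique_nbhdIn
    have hLB := reflTransGen_liftClique hv (ih L B hL (hB.erase hvB) (hNL hxN) hxB)
    rw [lift_of_not_mem hB hvB] at hLB
    by_cases hLN : L ⊆ G.nbhdIn W v
    · rwa [liftClique_of_subset hLN] at hLB
    · rw [liftClique_of_not_subset hLN] at hLB
      exact .head (IsCliqueEdgeIn.insert_of_ssuperset hv hL hNL
        (fun h => hLN (h ▸ subset_rfl)) hxN) hLB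
  by_cases hvK : v ∈ K <;> by_cases hvK' : v ∈ K'
  · rw [hv.eq_insert_of_mem hK hvK, hv.eq_insert_of_mem hK' hvK']
  · exact of_mem_of_not_mem hK hK' hxK hxK' hvK hvK'
  · exact symm_of (Relation.ReflTransGen _) (of_mem_of_not_mem hK' hK hxK' hxK hvK' hvK)
  · simpa only [lift_of_not_mem hK hvK, lift_of_not_mem hK' hvK'] using
      reflTransGen_liftClique hv (ih K K' (hK.erase hvK) (hK'.erase hvK') hxK hxK')

end Lift

theorem IsChordal.reflTransGen_isCliqueEdgeIn (hG : IsChordal G) (W : Finset α)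
    {K K' : Finset α} (hK : IsMaxCliqueIn G W K) (hK' : IsMaxCliqueIn G W K') (hxK : x ∈ K)
    (hxK' : x ∈ K') : Relation.ReflTransGen (G.IsCliqueEdgeIn W x) K K' := by
  induction W using Finset.strongInduction generalizing K K' with
  | H W ih =>
  by_cases hW : G.IsClique (W : Set α)
  · rw [hK.eq_of_isClique hW, hK'.eq_of_isClique hW]
  obtain ⟨s₁, s₂, hne, -, hs₁, hs₂⟩ := hG.exists_isSimplicialIn_pair W hW
  obtain ⟨v, hv, hvx⟩ : ∃ v, IsSimplicialIn G W v ∧ v ≠ x := by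
    by_cases h : s₁ = x
    · exact ⟨s₂, hs₂, fun h' => hne (h.trans h'.symm)⟩
    · exact ⟨s₁, hs₁, h⟩
  exact hv.reflTransGen_of_erase hvx (fun Q Q' => ih _ (erase_ssubset hv.mem))
    hK hK' hxK hxK'

end CliqueEdge

section CliqueGraph

variable {G : SimpleGraph V}

lemma isMaxCliqueIn_univ_iff {K : Finset V} : IsMaxCliqueIn G univ K ↔ MaxClique G K := by
  refine ⟨fun h => ⟨h.isClique, fun K' hK' hKK' => subset_antisymm hKK' fun y hy =>
    h.mem_of_forall_adj y (mem_univ y) fun z hz hzy => hK' hy (hKK' hz) (Ne.symm hzy)⟩,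
    fun h => ⟨subset_univ K, h.1, fun y _ hadj => ?_⟩⟩
  have hins : G.IsClique ((insert y K : Finset V) : Set V) := by
    rw [coe_insert]
    exact h.1.insert fun z hz hyz => hadj z hz hyz.symm
  exact h.2 _ hins (subset_insert y K) ▸ mem_insert_self y K

lemma exists_maxClique_superset {K : Finset V} (hK : G.IsClique (K : Set V)) :
    ∃ M : CV G, K ⊆ M.1 := by
  obtain ⟨M, hM, hKM⟩ := exists_isMaxCliqueIn_superset (subset_univ K) hK
  exact ⟨⟨M, isMaxCliqueIn_univ_iff.1 hM⟩, hKM⟩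

lemma separates_iff {S : Finset V} {u v : V} (hu : u ∉ S) (hv : v ∉ S) :
    Separates G S u v ↔ ¬ (G.inducedOn (univ \ S)).Reachable u v := by
  have hS : ∀ {z}, z ∉ S → z ∈ univ \ S := fun hz => mem_sdiff.2 ⟨mem_univ _, hz⟩
  refine ⟨fun h ⟨p⟩ => ?_, fun h => ⟨hu, hv, fun p => ?_⟩⟩
  · obtain ⟨z, hz, hzS⟩ := h.2.2 (p.mapLe (inducedOn_le _))
    rw [Walk.support_mapLe_eq_support] at hz
    exact (mem_sdiff.1 (Walk.mem_of_mem_support_inducedOn p (hS hu) hz)).2 hzS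
  · by_contra! hp
    exact h (reachable_inducedOn_of_walk le_rfl p fun z hz => hS (hp z hz))

lemma IsCliqueEdgeIn.cliqueGraph_adj {x : V} {K K' : Finset V}
    (he : G.IsCliqueEdgeIn univ x K K') (hK : MaxClique G K) (hK' : MaxClique G K') :
    (cliqueGraph G).Adj ⟨K, hK⟩ ⟨K', hK'⟩ := by
  refine ⟨fun h => he.ne (congrArg Subtype.val h), fun u hu w hw => ?_⟩
  have huS : u ∉ K ∩ K' := fun h => (mem_sdiff.1 hu).2 (mem_inter.1 h).2
  have hwS : w ∉ K ∩ K' := fun h => (mem_sdiff.1 hw).2 (mem_inter.1 h).1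
  refine ⟨(separates_iff huS hwS).2 (he.separates u hu w hw), fun S' hS' hsep => ?_⟩
  obtain ⟨s, hs, hsS'⟩ := exists_of_ssubset hS'
  obtain ⟨hsK, hsK'⟩ := mem_inter.1 hs
  have hus : G.Adj u s := hK.1 (mem_sdiff.1 hu).1 hsK fun h => huS (h ▸ hs)
  have hsw : G.Adj s w := hK'.1 hsK' (mem_sdiff.1 hw).1 fun h => hwS (h ▸ hs)
  obtain ⟨z, hz, hzS'⟩ := hsep.2.2 (.cons hus (.cons hsw .nil))
  simp only [Walk.support_cons, Walk.support_nil, List.mem_cons, List.not_mem_nil,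
    or_false] at hz
  rcases hz with rfl | rfl | rfl
  exacts [huS (hS'.1 hzS'), hsS' hzS', hwS (hS'.1 hzS')]

lemma IsChordal.reachable_deleteLabel_of_mem (hG : IsChordal G) {S : Finset V} {x : V}
    (hx : x ∉ S) {K M : CV G} (hK : x ∈ K.1) (hM : x ∈ M.1) :
    (deleteLabel G S).Reachable K M := by
  suffices ∀ B, Relation.ReflTransGen (G.IsCliqueEdgeIn univ x) K.1 B →
      ∀ hB : MaxClique G B, (deleteLabel G S).Reachable K ⟨B, hB⟩ from
    this M.1 (hG.reflTransGen_isCliqueEdgeIn univ (isMaxCliqueIn_univ_iff.2 K.2)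
      (isMaxCliqueIn_univ_iff.2 M.2) hK hM) M.2
  intro B hB
  induction hB with
  | refl => exact fun _ => .rfl
  | tail _ he ih =>
    intro hC
    have hB := isMaxCliqueIn_univ_iff.1 he.left
    refine (ih hB).trans (Adj.reachable ⟨he.cliqueGraph_adj hB hC, fun h => hx ?_⟩)
    exact h ▸ he.mem_label

lemma reachable_of_reachable_deleteLabel {S : Finset V}
    (hmin : ∀ K K' : CV G, (cliqueGraph G).Adj K K' → S.card ≤ (K.1 ∩ K'.1).card)
    {K K' : CV G} (h : (deleteLabel G S).Reachable K K') {a b : V} (ha : a ∈ K.1) (haS : a ∉ S)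
    (hb : b ∈ K'.1) (hbS : b ∉ S) : (G.inducedOn (univ \ S)).Reachable a b := by
  obtain ⟨p⟩ := h
  induction p generalizing a with
  | @nil C =>
    by_cases hab : a = b
    · exact hab ▸ .rfl
    · exact (inducedOn_adj.2 ⟨C.2.1 ha hb hab, by simpa, by simpa⟩).reachable
  | @cons C C' _ hadj _ ih =>
    have hcard := hmin _ _ hadj.1
    obtain ⟨y, hy, hyS⟩ : ∃ y ∈ C.1 ∩ C'.1, y ∉ S := by
      by_contra! hsub
      exact hadj.2 (eq_of_subset_of_card_le hsub hcard)
    have hya := ih (mem_inter.1 hy).2 hyS hb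
    by_cases hay : a = y
    · exact hay ▸ hya
    · exact (inducedOn_adj.2
        ⟨C.2.1 ha (mem_inter.1 hy).1 hay, by simpa, by simpa⟩).reachable.trans hya

lemma IsChordal.exists_reachable_deleteLabel (hG : IsChordal G) {S : Finset V} {a b : V}
    (h : (G.inducedOn (univ \ S)).Reachable a b) (ha : a ∉ S) (K : CV G) (haK : a ∈ K.1) :
    ∃ K' : CV G, b ∈ K'.1 ∧ (deleteLabel G S).Reachable K K' := by
  obtain ⟨p⟩ := h
  induction p generalizing K with
  | nil => exact ⟨K, haK, .rfl⟩
  | @cons a z _ hadj _ ih =>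
    obtain ⟨M, hM⟩ := exists_maxClique_superset (G := G) (K := {a, z})
      (by simpa [coe_pair, isClique_pair] using fun _ => hadj.1)
    obtain ⟨K', hbK', hMK'⟩ := ih (mem_sdiff.1 hadj.2.2).2 M (hM (by simp))
    exact ⟨K', hbK', (hG.reachable_deleteLabel_of_mem ha haK (hM (by simp))).trans hMK'⟩

end CliqueGraph

end SimpleGraph

theorem stmt4_general (G : SimpleGraph V) (hch : IsChordal G)
    (S : Finset V)
    (hmin : ∀ K K' : CV G, (cliqueGraph G).Adj K K' → S.card ≤ (K.1 ∩ K'.1).card)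
    (u v : V) (hu : u ∉ S) (hv : v ∉ S) :
    Separates G S u v ↔
      ∀ K K' : CV G, u ∈ K.1 → v ∈ K'.1 →
        (deleteLabel G S).connectedComponentMk K ≠ (deleteLabel G S).connectedComponentMk K' := by
  simp only [ne_eq, ConnectedComponent.eq, separates_iff hu hv]
  refine ⟨fun h K K' huK hvK' hKK' =>
    h (reachable_of_reachable_deleteLabel hmin hKK' huK hu hvK' hv), fun h huv => ?_⟩
  obtain ⟨K, hK⟩ := exists_maxClique_superset (K := {u}) (by simp)
  have huK : u ∈ K.1 := hK (Finset.mem_singleton_self u)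
  obtain ⟨K', hvK', hKK'⟩ := hch.exists_reachable_deleteLabel huv hu K huK
  exact h K K' huK hvK' hKK'

/-- for `S` the label of a minimum-weight edge of `C(G)` and `u, v ∉ S`,
`S` is a `u`-`v` separator iff every maximal `u`-clique and every maximal `v`-clique lie
in different connected components of `C(G) ⊖ S`. -/
theorem stmt4 (G : SimpleGraph V) (hG : G.Connected) (hch : IsChordal G)
    (S : Finset V)
    (hS : ∃ K K' : CV G, (cliqueGraph G).Adj K K' ∧ K.1 ∩ K'.1 = S)
    (hmin : ∀ K K' : CV G, (cliqueGraph G).Adj K K' → S.card ≤ (K.1 ∩ K'.1).card)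
    (u v : V) (hu : u ∉ S) (hv : v ∉ S) :
    Separates G S u v ↔
      ∀ K K' : CV G, u ∈ K.1 → v ∈ K'.1 →
        (deleteLabel G S).connectedComponentMk K ≠ (deleteLabel G S).connectedComponentMk K' :=
  stmt4_general G hch S hmin u v hu hv
end

section
/- Let G be a connected chordal graph with a layer structure on its clique graph. For any two adjacent units U and U' of the layer structure, the label of the edge between them equals V(U) ∩ V(U'), where V(U) denotes the union of all maximal cliques of G contained in U. -/
open SimpleGraph

attribute [local instance] Classical.propDecidable
set_option linter.unusedSectionVars false

variable {V : Type*} [Fintype V] [DecidableEq V]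

/-!
A crossing edge `KK'` between distinct units has the minimum weight `w`, so its label `S`
has `|S| = w`, whereas every edge inside a unit has weight `> w` and so is not contained in
`S`. Hence cliques of one unit are linked, outside `S`, by walks of `G`. A vertex of
`V(U) ∩ V(U')` outside `S` would then join `u ∈ K \ K'` to `v ∈ K' \ K` avoiding `S`,
contradicting that `S` separates `u` from `v`.
-/

def ReachableAvoiding (G : SimpleGraph V) (S : Finset V) (y z : V) : Prop :=
  ∃ q : G.Walk y z, ∀ a ∈ q.support, a ∉ S

namespace ReachableAvoiding

variable {G : SimpleGraph V} {S : Finset V} {x y z : V}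

lemma symm (h : ReachableAvoiding G S y z) : ReachableAvoiding G S z y := by
  obtain ⟨q, hq⟩ := h
  exact ⟨q.reverse, fun a ha => hq a (by simpa using ha)⟩

lemma trans (h₁ : ReachableAvoiding G S x y) (h₂ : ReachableAvoiding G S y z) :
    ReachableAvoiding G S x z := by
  obtain ⟨q₁, hq₁⟩ := h₁
  obtain ⟨q₂, hq₂⟩ := h₂
  refine ⟨q₁.append q₂, fun a ha => ?_⟩
  rcases (Walk.mem_support_append_iff _ _).mp ha with ha | ha
  exacts [hq₁ a ha, hq₂ a ha]

end ReachableAvoiding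

lemma Separates.not_reachableAvoiding {G : SimpleGraph V} {S : Finset V} {u v : V}
    (h : Separates G S u v) : ¬ ReachableAvoiding G S u v := by
  rintro ⟨q, hq⟩
  obtain ⟨a, ha, haS⟩ := h.2.2 q
  exact hq a ha haS

lemma SimpleGraph.IsClique.reachableAvoiding {G : SimpleGraph V} {M : Finset V}
    (hM : G.IsClique (M : Set V)) {S : Finset V} {y z : V} (hy : y ∈ M) (hz : z ∈ M)
    (hyS : y ∉ S) (hzS : z ∉ S) : ReachableAvoiding G S y z := by
  by_cases hyz : y = z
  · subst hyz
    exact ⟨Walk.nil, by simpa using hyS⟩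
  · refine ⟨Walk.cons (hM hy hz hyz) Walk.nil, fun a ha => ?_⟩
    simp only [Walk.support_cons, Walk.support_nil, List.mem_cons,
      List.not_mem_nil, or_false] at ha
    rcases ha with rfl | rfl
    exacts [hyS, hzS]

lemma MaxClique.sdiff_nonempty {G : SimpleGraph V} {K K' : CV G} (hne : K ≠ K') :
    (K.1 \ K'.1).Nonempty := by
  rw [Finset.nonempty_iff_ne_empty, Ne, Finset.sdiff_eq_empty_iff_subset]
  exact fun hsub => hne (Subtype.ext (K.2.2 K'.1 K'.2.1 hsub))

section Units

variable {G : SimpleGraph V} {w : ℕ}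

lemma card_inter_eq_of_umk_ne {K K' : CV G} (hKK' : (cliqueGraph G).Adj K K')
    (hU : umk G w K ≠ umk G w K') : (K.1 ∩ K'.1).card = w := by
  by_contra hne
  exact hU (ConnectedComponent.sound (Adj.reachable ⟨hKK', hne⟩))

lemma unitGraph_reachable_reachableAvoiding
    (hw : ∀ N N' : CV G, (cliqueGraph G).Adj N N' → w ≤ (N.1 ∩ N'.1).card)
    {S : Finset V} (hS : S.card ≤ w) {M K : CV G} (hMK : (unitGraph G w).Reachable M K)
    {y z : V} (hy : y ∈ M.1) (hyS : y ∉ S) (hz : z ∈ K.1) (hzS : z ∉ S) :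
    ReachableAvoiding G S y z := by
  obtain ⟨p⟩ := hMK
  induction p generalizing y with
  | @nil N => exact IsClique.reachableAvoiding N.2.1 hy hz hyS hzS
  | @cons M N _ hMN _ ih =>
    have hcard : S.card < (M.1 ∩ N.1).card := by
      have := hw M N hMN.1
      have := hMN.2
      omega
    obtain ⟨a, haMN, haS⟩ := Finset.not_subset.mp
      fun hsub => (Finset.card_le_card hsub).not_gt hcard
    rw [Finset.mem_inter] at haMN
    exact (IsClique.reachableAvoiding M.2.1 hy haMN.1 hyS haS).trans (ih haMN.2 haS hz)

end Units

theorem stmt11_general (G : SimpleGraph V)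
    (w : ℕ) (hw : IsMinEdgeWeight G w) (U U' : LUnit G w)
    (hadj : (layerGraph G w).Adj U U')
    (K K' : CV G) (hKK' : (cliqueGraph G).Adj K K')
    (hK : umk G w K = U) (hK' : umk G w K' = U') :
    (↑(K.1 ∩ K'.1) : Set V) = unitVerts G w U ∩ unitVerts G w U' := by
  have hSw : (K.1 ∩ K'.1).card ≤ w :=
    (card_inter_eq_of_umk_ne hKK' (hK ▸ hK' ▸ hadj.1)).le
  ext x
  refine ⟨fun hx => ?_, ?_⟩
  · rw [Finset.coe_inter] at hx
    exact ⟨⟨K, hK, hx.1⟩, ⟨K', hK', hx.2⟩⟩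
  rintro ⟨⟨M, hM, hxM⟩, ⟨M', hM', hxM'⟩⟩
  by_contra hxS
  obtain ⟨u, hu⟩ := MaxClique.sdiff_nonempty hKK'.1
  obtain ⟨v, hv⟩ := MaxClique.sdiff_nonempty hKK'.1.symm
  have hsep := (hKK'.2 u hu v hv).1
  have hux := unitGraph_reachable_reachableAvoiding hw.2 hSw
    (ConnectedComponent.exact (hM.trans hK.symm)) hxM hxS (Finset.mem_sdiff.mp hu).1 hsep.1
  have hxv := unitGraph_reachable_reachableAvoiding hw.2 hSw
    (ConnectedComponent.exact (hM'.trans hK'.symm)) hxM' hxS (Finset.mem_sdiff.mp hv).1 hsep.2.1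
  exact hsep.not_reachableAvoiding (hux.symm.trans hxv)

/-- the label of any edge between two adjacent units `U` and `U'` equals
`𝒱(U) ∩ 𝒱(U')`. -/
theorem stmt11 (G : SimpleGraph V) (hG : G.Connected) (hch : IsChordal G)
    (w : ℕ) (hw : IsMinEdgeWeight G w) (U U' : LUnit G w)
    (hadj : (layerGraph G w).Adj U U')
    (K K' : CV G) (hKK' : (cliqueGraph G).Adj K K')
    (hK : umk G w K = U) (hK' : umk G w K' = U') :
    (↑(K.1 ∩ K'.1) : Set V) = unitVerts G w U ∩ unitVerts G w U' :=
  stmt11_general G w hw U U' hadj K K' hKK' hK hK'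
end
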